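/- (Δ-system lemma, uncountable case) Every uncountable family of finite sets contains an uncountable subfamily forming a Δ-system, i.e., there is a fixed finite set R (the root) such that any two distinct members of the subfamily intersect exactly in R. -/

import Mathlib

/-!
Pass to an uncountable subfamily of sets of a fixed size `n` and induct on `n`. If some point
lies in uncountably many of the sets, put it into the root and remove it from those sets, which
lowers the size. Otherwise every point lies in only countably many sets; then a maximal pairwise
disjoint subfamily is uncountable, since each set of the family either belongs to it or meets one
of the countably many points it covers. Such a subfamily is a Δ-system with empty root.
-/

open Set

section

variable {I α : Type*}

theorem exists_not_countable_fiber {β : Type*} [Countable β] {J : Set I} (hJ : ¬ J.Countable)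
    (f : I → β) : ∃ b, ¬ {i ∈ J | f i = b}.Countable := by
  by_contra! h
  refine hJ ((countable_iUnion h).mono fun i hi => ?_)
  exact mem_iUnion.2 ⟨f i, hi, rfl⟩

theorem exists_not_countable_pairwiseDisjoint {A : I → Set α} {J : Set I} (hJ : ¬ J.Countable)
    (hA : ∀ i ∈ J, (A i).Countable) (hpoint : ∀ x, {i ∈ J | x ∈ A i}.Countable) :
    ∃ K ⊆ J, ¬ K.Countable ∧ K.PairwiseDisjoint A := by
  obtain ⟨M, hM⟩ := zorn_subset {K | K ⊆ J ∧ K.PairwiseDisjoint A} fun c hc hchain =>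
    ⟨⋃₀ c, ⟨sUnion_subset fun K hK => (hc hK).1,
      (hchain.pairwiseDisjoint_sUnion A).2 fun K hK => (hc hK).2⟩,
      fun K hK => subset_sUnion_of_mem hK⟩
  obtain ⟨hMJ, hMdisj⟩ := hM.prop
  refine ⟨M, hMJ, fun hMc => hJ ?_, hMdisj⟩
  have hcover : J ⊆ (⋃ x ∈ ⋃ j ∈ M, A j, {i ∈ J | x ∈ A i}) ∪ M := by
    intro i hi
    by_cases hiM : i ∈ M
    · exact Or.inr hiM
    have hmeet : ∃ j ∈ M, i ≠ j ∧ ¬ Disjoint (A i) (A j) := by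
      by_contra! h
      exact hiM (hM.mem_of_prop_insert ⟨insert_subset hi hMJ, hMdisj.insert h⟩)
    obtain ⟨j, hj, -, hij⟩ := hmeet
    obtain ⟨x, hxi, hxj⟩ := not_disjoint_iff.1 hij
    exact Or.inl (mem_biUnion (mem_biUnion hj hxj) ⟨hi, hxi⟩)
  exact ((hMc.biUnion fun j hj => hA j (hMJ hj)).biUnion fun x _ => hpoint x)
    |>.union hMc |>.mono hcover

variable [DecidableEq α]

def IsDeltaSystem (A : I → Finset α) (J : Set I) (R : Finset α) : Prop :=
  ∀ i ∈ J, ∀ j ∈ J, i ≠ j → A i ∩ A j = R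

theorem IsDeltaSystem.of_erase {A : I → Finset α} {J : Set I} {R : Finset α} {x : α}
    (h : IsDeltaSystem (fun i => (A i).erase x) J R) (hx : ∀ i ∈ J, x ∈ A i) :
    IsDeltaSystem A J (insert x R) := by
  intro i hi j hj hij
  rw [← h i hi j hj hij, Finset.insert_inter_distrib, Finset.insert_erase (hx i hi),
    Finset.insert_erase (hx j hj)]

theorem isDeltaSystem_empty_of_pairwiseDisjoint {A : I → Finset α} {J : Set I}
    (h : J.PairwiseDisjoint fun i => (A i : Set α)) : IsDeltaSystem A J ∅ :=
  fun _ hi _ hj hij => Finset.disjoint_iff_inter_eq_empty.1 (Finset.disjoint_coe.1 (h hi hj hij))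

theorem exists_isDeltaSystem_of_card_eq (n : ℕ) {A : I → Finset α} {J : Set I}
    (hJ : ¬ J.Countable) (hcard : ∀ i ∈ J, (A i).card = n) :
    ∃ K ⊆ J, ¬ K.Countable ∧ ∃ R, IsDeltaSystem A K R := by
  induction n generalizing A J with
  | zero =>
    refine ⟨J, subset_rfl, hJ, ∅, fun i hi j _ _ => ?_⟩
    rw [Finset.card_eq_zero.1 (hcard i hi), Finset.empty_inter]
  | succ n ih =>
    by_cases hpoint : ∃ x, ¬ {i ∈ J | x ∈ A i}.Countable
    · obtain ⟨x, hx⟩ := hpoint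
      obtain ⟨K, hKJ, hK, R, hR⟩ := ih (A := fun i => (A i).erase x) hx fun i hi => by
        rw [Finset.card_erase_of_mem hi.2, hcard i hi.1, Nat.add_sub_cancel]
      exact ⟨K, fun i hi => (hKJ hi).1, hK, insert x R, hR.of_erase fun i hi => (hKJ hi).2⟩
    · push Not at hpoint
      obtain ⟨K, hKJ, hK, hdisj⟩ :=
        exists_not_countable_pairwiseDisjoint (A := fun i => (A i : Set α)) hJ
          (fun i _ => (A i).countable_toSet) hpoint
      exact ⟨K, hKJ, hK, ∅, isDeltaSystem_empty_of_pairwiseDisjoint hdisj⟩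

end

/-- Δ-system lemma: every uncountable family of finite sets contains an
uncountable subfamily which is a Δ-system with some finite root `R`. -/
theorem stmt_7 {I α : Type*} [DecidableEq α]
    (hI : ¬ (Set.univ : Set I).Countable) (A : I → Finset α) :
    ∃ J : Set I, ¬ J.Countable ∧ ∃ R : Finset α,
      ∀ i ∈ J, ∀ j ∈ J, i ≠ j → A i ∩ A j = R := by
  obtain ⟨n, hn⟩ := exists_not_countable_fiber hI fun i => (A i).card
  obtain ⟨J, -, hJ, R, hR⟩ := exists_isDeltaSystem_of_card_eq n hn fun i hi => hi.2
  exact ⟨J, hJ, R, hR⟩
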